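/- The 2×2 real matrix M(e) = [[A₁, −A₂],[−A₂, A₁]] with A₁ = (8 − e⁴ − 4e²) T Ω² / (e⁴ (1−e²)^{1/3}) and A₂ = 8(1−e²)^{1/6} T Ω² / e⁴ is positive definite for every e ∈ (0,1), T > 0, Ω ≠ 0. -/

import Mathlib

/-!
A symmetric matrix `!![a, b; b, a]` is positive definite as soon as `|b| < a`. Here
`(1 - e²)^(1/6) (1 - e²)^(1/3) = √(1 - e²)`, so after cancelling the positive factor
`T Ω² / e⁴` this becomes `8 √(1 - e²) < 8 - e⁴ - 4e²`, which follows by squaring from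
`(8 - s² - 4s)² - 64 (1 - s) = s³ (s + 8)` with `s = e²`.
-/

open Matrix Real

theorem Matrix.posDef_fin_two_of_sq_lt {a b c : ℝ} (ha : 0 < a) (hbc : b ^ 2 < a * c) :
    !![a, b; b, c].PosDef := by
  rw [posDef_iff_dotProduct_mulVec]
  refine ⟨?_, fun x hx ↦ ?_⟩
  · ext i j
    fin_cases i <;> fin_cases j <;> rfl
  have hx' : x 0 ≠ 0 ∨ x 1 ≠ 0 := by
    by_contra! h
    exact hx (funext fun i ↦ by fin_cases i <;> simp [h.1, h.2])
  simp only [dotProduct, mulVec, Fin.sum_univ_two, star_trivial, cons_val_zero, cons_val_one,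
    of_apply, cons_val_fin_one, Pi.star_apply]
  -- `a` times the form is `(a x₀ + b x₁)² + (a c - b²) x₁²`
  suffices 0 < a * (x 0 * (a * x 0 + b * x 1) + x 1 * (b * x 0 + c * x 1)) from
    pos_of_mul_pos_right this ha.le
  rcases eq_or_ne (x 1) 0 with h1 | h1
  · have h0 : x 0 ≠ 0 := hx'.resolve_right (not_not.2 h1)
    rw [h1]
    nlinarith [mul_pos ha (mul_pos ha (sq_pos_of_ne_zero h0))]
  · nlinarith [sq_nonneg (a * x 0 + b * x 1), sq_pos_of_ne_zero h1]

theorem Matrix.posDef_fin_two_of_abs_lt {a b : ℝ} (h : |b| < a) : !![a, b; b, a].PosDef :=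
  posDef_fin_two_of_sq_lt ((abs_nonneg b).trans_lt h) (by nlinarith [sq_abs b, abs_nonneg b])

theorem eight_mul_sqrt_one_sub_lt {s : ℝ} (hs₀ : 0 < s) (hs₁ : s < 1) :
    8 * √(1 - s) < 8 - s ^ 2 - 4 * s := by
  have hpos : 0 < 8 - s ^ 2 - 4 * s := by nlinarith
  rw [← lt_div_iff₀' (by norm_num), Real.sqrt_lt' (by positivity)]
  nlinarith [pow_pos hs₀ 3]

theorem arnold_block_posDef (e T Ω : ℝ) (he : e ∈ Set.Ioo (0 : ℝ) 1) (hT : 0 < T)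
    (hΩ : Ω ≠ 0) :
    Matrix.PosDef
      !![(8 - e ^ 4 - 4 * e ^ 2) * T * Ω ^ 2 / (e ^ 4 * (1 - e ^ 2) ^ ((1 : ℝ) / 3)),
         -(8 * (1 - e ^ 2) ^ ((1 : ℝ) / 6) * T * Ω ^ 2 / e ^ 4);
         -(8 * (1 - e ^ 2) ^ ((1 : ℝ) / 6) * T * Ω ^ 2 / e ^ 4),
         (8 - e ^ 4 - 4 * e ^ 2) * T * Ω ^ 2 / (e ^ 4 * (1 - e ^ 2) ^ ((1 : ℝ) / 3))] := by
  obtain ⟨he₀, he₁⟩ := he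
  have hx : 0 < 1 - e ^ 2 := by nlinarith
  have hroot : (1 - e ^ 2) ^ ((1 : ℝ) / 6) * (1 - e ^ 2) ^ ((1 : ℝ) / 3) = √(1 - e ^ 2) := by
    rw [← rpow_add hx, sqrt_eq_rpow]
    norm_num
  have hineq : 8 * √(1 - e ^ 2) < 8 - e ^ 4 - 4 * e ^ 2 := by
    simpa [← pow_mul] using eight_mul_sqrt_one_sub_lt (pow_pos he₀ 2) (by nlinarith)
  apply posDef_fin_two_of_abs_lt
  rw [abs_neg, abs_of_pos (by positivity)]
  calc 8 * (1 - e ^ 2) ^ ((1 : ℝ) / 6) * T * Ω ^ 2 / e ^ 4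
      = 8 * √(1 - e ^ 2) * (T * Ω ^ 2 / e ^ 4) / (1 - e ^ 2) ^ ((1 : ℝ) / 3) := by
        rw [← hroot]; field_simp
    _ < (8 - e ^ 4 - 4 * e ^ 2) * (T * Ω ^ 2 / e ^ 4) / (1 - e ^ 2) ^ ((1 : ℝ) / 3) := by
        gcongr
    _ = _ := by field_simp
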